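/- arXiv:1803.08397 — 5 statements merged into one kernel-verified Lean document; each statement's English description precedes it below -/
import Mathlib

section
/- Let p > 1, N ≥ 1, R > 0, μ ∈ ℝ with μ + μ* > 0 where μ* = 2(p+1)/(p-1)². If 0 < c₋ ≤ (μ + μ*)^{1/(p-1)}, then w₋(r) = c₋(R-r)^{-2/(p-1)} satisfies w₋'' + ((N-1)/r) w₋' + μ (R-r)^{-2} w₋ - w₋^p ≥ 0 on (0, R), i.e. w₋ is a subsolution of the radial equation. -/
/-! With `α = -2/(p-1)` one has `α(α-1) = μ*` and `αp = α - 2`, so for `w = c(R-r)^α` the terms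
`w''`, `μ(R-r)^{-2} w` and `w^p` are all multiples of `(R-r)^{α-2}`, with total coefficient
`c(μ* + μ - c^{p-1}) ≥ 0`. The remaining term `((N-1)/r) w'` is nonnegative because `α < 0`
makes `w` increasing. -/

open Set

section SubRpow

variable {c R a x : ℝ}

theorem hasDerivAt_const_mul_sub_rpow (hx : x < R) :
    HasDerivAt (fun y => c * (R - y) ^ a) (-(c * a) * (R - x) ^ (a - 1)) x := by
  refine ((((hasDerivAt_id' x).const_sub R).rpow_const (p := a)
    (Or.inl (sub_ne_zero.2 hx.ne'))).const_mul c).congr_deriv ?_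
  ring

theorem deriv_const_mul_sub_rpow (hx : x < R) :
    deriv (fun y => c * (R - y) ^ a) x = -(c * a) * (R - x) ^ (a - 1) :=
  (hasDerivAt_const_mul_sub_rpow hx).deriv

theorem deriv_deriv_const_mul_sub_rpow (hx : x < R) :
    deriv (deriv fun y => c * (R - y) ^ a) x = c * (a * (a - 1)) * (R - x) ^ (a - 2) := by
  have hderiv : deriv (fun y => c * (R - y) ^ a) =ᶠ[nhds x]
      fun y => -(c * a) * (R - y) ^ (a - 1) := by
    filter_upwards [Iio_mem_nhds hx] with y hy using deriv_const_mul_sub_rpow hy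
  rw [hderiv.deriv_eq, deriv_const_mul_sub_rpow hx]
  ring_nf

theorem radial_operator_const_mul_sub_rpow {p μ k : ℝ} (hc : 0 < c) (hx : x < R)
    (hap : a * p = a - 2) :
    deriv (deriv fun y => c * (R - y) ^ a) x + k / x * deriv (fun y => c * (R - y) ^ a) x
        + μ / (R - x) ^ 2 * (c * (R - x) ^ a) - (c * (R - x) ^ a) ^ p
      = k / x * (-(c * a) * (R - x) ^ (a - 1))
        + c * (R - x) ^ (a - 2) * (a * (a - 1) + μ - c ^ (p - 1)) := by
  have hRx : 0 < R - x := sub_pos.2 hx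
  have hsplit : (R - x) ^ a = (R - x) ^ (a - 2) * (R - x) ^ 2 := by
    rw [← Real.rpow_natCast, ← Real.rpow_add hRx]
    norm_num
  have hpow : (c * (R - x) ^ a) ^ p = c ^ (p - 1) * c * (R - x) ^ (a - 2) := by
    rw [Real.mul_rpow hc.le (Real.rpow_nonneg hRx.le a), ← Real.rpow_mul hRx.le, hap,
      Real.rpow_sub_one hc.ne', div_mul_cancel₀ _ hc.ne']
  rw [deriv_deriv_const_mul_sub_rpow hx, deriv_const_mul_sub_rpow hx, hpow, hsplit]
  field_simp
  ring

end SubRpow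

theorem stmt5_general (p μ μs R c : ℝ) (N : ℕ) (hp : 1 < p) (hN : 1 ≤ N)
    (hμs : μs = 2 * (p + 1) / (p - 1)^2) (hμ : 0 < μ + μs)
    (hc0 : 0 < c) (hc : c ≤ (μ + μs) ^ ((1:ℝ)/(p-1)))
    (w : ℝ → ℝ) (hw : w = fun r : ℝ => c * (R - r) ^ (-(2/(p-1)))) :
    ∀ r ∈ Set.Ioo (0:ℝ) R,
      0 ≤ deriv (deriv w) r + ((N:ℝ) - 1) / r * deriv w r
        + μ / (R - r)^2 * w r - (w r) ^ p := by
  rintro r ⟨hr0, hrR⟩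
  have hp1 : 0 < p - 1 := sub_pos.2 hp
  have hα : -(2 / (p - 1)) * p = -(2 / (p - 1)) - 2 := by field_simp; ring
  have hαμs : -(2 / (p - 1)) * (-(2 / (p - 1)) - 1) = μs := by rw [hμs]; field_simp; ring
  have hcμ : c ^ (p - 1) ≤ μ + μs :=
    (Real.le_rpow_inv_iff_of_pos hc0.le hμ.le hp1).1 (by rwa [← one_div])
  have hN1 : (0 : ℝ) ≤ N - 1 := sub_nonneg.2 (by exact_mod_cast hN)
  have hRr : 0 < R - r := sub_pos.2 hrR
  subst hw
  rw [radial_operator_const_mul_sub_rpow hc0 hrR hα, hαμs]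
  refine add_nonneg (mul_nonneg (div_nonneg hN1 hr0.le) (mul_nonneg ?_ ?_)) ?_
  · rw [mul_neg, neg_neg]
    positivity
  · exact Real.rpow_nonneg hRr.le _
  · exact mul_nonneg (mul_nonneg hc0.le (Real.rpow_nonneg hRr.le _)) (by linarith)

/-- If `0 < c₋ ≤ (μ+μ*)^{1/(p-1)}` then `w₋(r) = c₋(R-r)^{-2/(p-1)}` is a subsolution
of the radial equation on `(0, R)`. -/
theorem stmt5 (p μ μs R c : ℝ) (N : ℕ) (hp : 1 < p) (hN : 1 ≤ N)
    (hμs : μs = 2 * (p + 1) / (p - 1)^2) (hμ : 0 < μ + μs)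
    (hR : 0 < R) (hc0 : 0 < c) (hc : c ≤ (μ + μs) ^ ((1:ℝ)/(p-1)))
    (w : ℝ → ℝ) (hw : w = fun r : ℝ => c * (R - r) ^ (-(2/(p-1)))) :
    ∀ r ∈ Set.Ioo (0:ℝ) R,
      0 ≤ deriv (deriv w) r + ((N:ℝ) - 1) / r * deriv w r
        + μ / (R - r)^2 * w r - (w r) ^ p :=
  stmt5_general p μ μs R c N hp hN hμs hμ hc0 hc w hw
end

section
/- Let N ≥ 1, δ₀ > 0, μ < 0, and let η solve the ODE η'' + ((N-1)/r) η' + μ η/(δ₀ - r)² = 0 on (δ₀/2, δ₀) with η(δ₀/2) = 1, η'(δ₀/2) = 0. Then η is positive and nondecreasing on (δ₀/2, δ₀): η has no interior local maximum, η ≥ 1 and η' ≥ 0 on its interval of existence within (δ₀/2, δ₀). -/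
/-!
With `n = N - 1` and `c(t) = μ/(δ₀ - t)² < 0`, the equation reads `(tⁿ η')' = -tⁿ c η`.
As long as `η > 0` the weight `tⁿ η'` therefore increases from its initial value `0`, so `η' > 0`
and `η` increases from `η(δ₀/2) = 1`. Hence `η` has no first zero, `η' > 0` on the whole open
interval, and an interior local maximum (where `η' = 0`) is impossible.
-/

open Set

def RadialEqOn (n : ℕ) (c η : ℝ → ℝ) (s : Set ℝ) : Prop :=
  ∀ t ∈ s, deriv (deriv η) t + n / t * deriv η t + c t * η t = 0

section RadialEq

variable {η c : ℝ → ℝ} {n : ℕ} {a b : ℝ}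

lemma differentiableAt_deriv_of_contDiffOn_Ico (hη : ContDiffOn ℝ 2 η (Ico a b)) {t : ℝ}
    (ht : t ∈ Ioo a b) : DifferentiableAt ℝ (deriv η) t :=
  ((hη.contDiffAt (Ico_mem_nhds ht.1 ht.2)).derivWithin (m := 1) (by norm_num)).differentiableAt
    one_ne_zero

/-- The radial equation in divergence form. -/
lemma hasDerivAt_pow_mul_deriv {t : ℝ} (ht : t ≠ 0) (hη' : DifferentiableAt ℝ (deriv η) t)
    (hode : deriv (deriv η) t + n / t * deriv η t + c t * η t = 0) :
    HasDerivAt (fun r => r ^ n * deriv η r) (-(t ^ n * c t * η t)) t := by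
  refine ((hasDerivAt_pow n t).mul hη'.hasDerivAt).congr_deriv ?_
  have hη'' : deriv (deriv η) t = -(n / t * deriv η t) - c t * η t := by linarith
  rw [hη'']
  rcases n with _ | k
  · simp
  · rw [Nat.add_sub_cancel, pow_succ]
    field_simp
    ring

lemma deriv_pos_of_radialEqOn (ha : 0 < a) (hη : ContDiffOn ℝ 2 η (Ico a b))
    (hη'a : ContinuousAt (deriv η) a) (hη'a0 : deriv η a = 0)
    (hode : RadialEqOn n c η (Ioo a b))
    {m : ℝ} (hmb : m < b) (hcη : ∀ t ∈ Ioo a m, c t * η t < 0) :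
    ∀ t ∈ Ioc a m, 0 < deriv η t := by
  intro t ht
  have hw : StrictMonoOn (fun r => r ^ n * deriv η r) (Icc a m) := by
    refine strictMonoOn_of_deriv_pos (convex_Icc a m) ?_ ?_
    · intro r hr
      refine ((continuous_pow n).continuousAt.mul ?_).continuousWithinAt
      rcases hr.1.eq_or_lt with rfl | hra
      · exact hη'a
      · exact (differentiableAt_deriv_of_contDiffOn_Ico hη ⟨hra, hr.2.trans_lt hmb⟩).continuousAt
    · intro r hr
      rw [interior_Icc] at hr
      have hr0 : 0 < r := ha.trans hr.1
      have hrb : r ∈ Ioo a b := ⟨hr.1, hr.2.trans hmb⟩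
      rw [(hasDerivAt_pow_mul_deriv hr0.ne' (differentiableAt_deriv_of_contDiffOn_Ico hη hrb)
        (hode r hrb)).deriv]
      have := mul_neg_of_pos_of_neg (pow_pos hr0 n) (hcη r hr)
      linarith [mul_assoc (r ^ n) (c r) (η r)]
  have := hw ⟨le_rfl, ht.1.le.trans ht.2⟩ ⟨ht.1.le, ht.2⟩ ht.1
  simp only [hη'a0, mul_zero] at this
  exact pos_of_mul_pos_right this (pow_pos (ha.trans ht.1) n).le

lemma strictMonoOn_Icc_of_radialEqOn (ha : 0 < a) (hη : ContDiffOn ℝ 2 η (Ico a b))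
    (hη'a : ContinuousAt (deriv η) a) (hη'a0 : deriv η a = 0)
    (hode : RadialEqOn n c η (Ioo a b))
    {m : ℝ} (hmb : m < b) (hcη : ∀ t ∈ Ioo a m, c t * η t < 0) :
    StrictMonoOn η (Icc a m) := by
  refine strictMonoOn_of_deriv_pos (convex_Icc a m)
    (hη.continuousOn.mono (Icc_subset_Ico_right hmb)) fun t ht => ?_
  rw [interior_Icc] at ht
  exact deriv_pos_of_radialEqOn ha hη hη'a hη'a0 hode hmb hcη t (Ioo_subset_Ioc_self ht)

/-- `η` cannot reach `0`: at a first zero `s`, `η` would be increasing on `[a, s]`. -/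
lemma pos_of_radialEqOn (ha : 0 < a) (hη : ContDiffOn ℝ 2 η (Ico a b))
    (hη'a : ContinuousAt (deriv η) a) (hη'a0 : deriv η a = 0)
    (hode : RadialEqOn n c η (Ioo a b))
    (hc : ∀ t ∈ Ioo a b, c t < 0) (hηa : 0 < η a) :
    ∀ t ∈ Ico a b, 0 < η t := by
  by_contra! ⟨r, hr, hηr⟩
  have hZ : IsCompact (Icc a r ∩ η ⁻¹' Iic 0) :=
    isCompact_Icc.of_isClosed_subset
      ((hη.continuousOn.mono (Icc_subset_Ico_right hr.2)).preimage_isClosed_of_isClosed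
        isClosed_Icc isClosed_Iic) inter_subset_left
  obtain ⟨s, ⟨hs, hηs⟩, hleast⟩ := hZ.exists_isLeast ⟨r, ⟨⟨hr.1, le_rfl⟩, hηr⟩⟩
  have hpos : ∀ t ∈ Ioo a s, c t * η t < 0 := by
    intro t ht
    refine mul_neg_of_neg_of_pos (hc t ⟨ht.1, (ht.2.trans_le hs.2).trans hr.2⟩) ?_
    by_contra! hηt
    exact ht.2.not_ge (hleast ⟨⟨ht.1.le, ht.2.le.trans hs.2⟩, hηt⟩)
  have has : a < s := hs.1.lt_of_ne fun has => by subst has; exact hηs.not_gt hηa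
  have := strictMonoOn_Icc_of_radialEqOn ha hη hη'a hη'a0 hode (hs.2.trans_lt hr.2) hpos
    ⟨le_rfl, hs.1⟩ ⟨hs.1, le_rfl⟩ has
  exact (hηa.trans this).not_ge hηs

lemma lt_and_deriv_pos_of_radialEqOn (ha : 0 < a) (hη : ContDiffOn ℝ 2 η (Ico a b))
    (hη'a : ContinuousAt (deriv η) a) (hη'a0 : deriv η a = 0) (hode : RadialEqOn n c η (Ioo a b))
    (hc : ∀ t ∈ Ioo a b, c t < 0) (hηa : 0 < η a) :
    ∀ t ∈ Ioo a b, η a < η t ∧ 0 < deriv η t := by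
  intro t ht
  have hcη : ∀ s ∈ Ioo a t, c s * η s < 0 := fun s hs =>
    have hsb : s ∈ Ioo a b := ⟨hs.1, hs.2.trans ht.2⟩
    mul_neg_of_neg_of_pos (hc s hsb)
      (pos_of_radialEqOn ha hη hη'a hη'a0 hode hc hηa s (Ioo_subset_Ico_self hsb))
  exact ⟨strictMonoOn_Icc_of_radialEqOn ha hη hη'a hη'a0 hode ht.2 hcη
      ⟨le_rfl, ht.1.le⟩ ⟨ht.1.le, le_rfl⟩ ht.1,
    deriv_pos_of_radialEqOn ha hη hη'a hη'a0 hode ht.2 hcη t ⟨ht.1, le_rfl⟩⟩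

end RadialEq

/-- For `μ < 0`, the solution of `η'' + ((N-1)/r)η' + μη/(δ₀-r)² = 0` on `(δ₀/2, δ₀)`
with `η(δ₀/2) = 1`, `η'(δ₀/2) = 0` is positive and nondecreasing: `η ≥ 1`, `η' ≥ 0`,
and `η` has no interior local maximum. -/
theorem stmt9 (N : ℕ) (hN : 1 ≤ N) (δ₀ μ : ℝ) (hδ₀ : 0 < δ₀) (hμ : μ < 0)
    (η : ℝ → ℝ)
    (hreg : ContDiffOn ℝ 2 η (Set.Ico (δ₀/2) δ₀))
    (hode : ∀ r ∈ Set.Ico (δ₀/2) δ₀,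
      deriv (deriv η) r + ((N:ℝ) - 1) / r * deriv η r + μ / (δ₀ - r)^2 * η r = 0)
    (hinit : η (δ₀/2) = 1) (hinit' : deriv η (δ₀/2) = 0) :
    (∀ r ∈ Set.Ico (δ₀/2) δ₀, 1 ≤ η r ∧ 0 ≤ deriv η r) ∧
    (∀ r ∈ Set.Ioo (δ₀/2) δ₀, ¬ IsLocalMax η r) := by
  obtain ⟨n, rfl⟩ : ∃ n, N = n + 1 := ⟨N - 1, by omega⟩
  have hδ : δ₀ / 2 < δ₀ := by linarith
  have hc : ∀ t ∈ Ico (δ₀/2) δ₀, μ / (δ₀ - t) ^ 2 < 0 := fun t ht =>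
    div_neg_of_neg_of_pos hμ (pow_pos (sub_pos.2 ht.2) 2)
  have hrad : RadialEqOn n (fun t => μ / (δ₀ - t) ^ 2) η (Ioo (δ₀/2) δ₀) := fun t ht => by
    simpa using hode t (Ioo_subset_Ico_self ht)
  -- At `δ₀/2` the equation reads `η'' = -μ/(δ₀/2)² ≠ 0`, so `η'` is differentiable there.
  have hη'a : ContinuousAt (deriv η) (δ₀/2) := by
    refine (differentiableAt_of_deriv_ne_zero fun h => ?_).continuousAt
    have := hode _ ⟨le_rfl, hδ⟩
    rw [h, hinit, hinit'] at this
    linarith [hc _ ⟨le_rfl, hδ⟩]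
  have hmono := lt_and_deriv_pos_of_radialEqOn (by positivity) hreg hη'a hinit' hrad
    (fun t ht => hc t (Ioo_subset_Ico_self ht)) (hinit ▸ one_pos)
  refine ⟨fun r hr => ?_, fun r hr hmax => (hmono r hr).2.ne' hmax.deriv_eq_zero⟩
  rcases hr.1.eq_or_lt with rfl | h
  · simp [hinit, hinit']
  · obtain ⟨hηr, hη'r⟩ := hmono r ⟨h, hr.2⟩
    exact ⟨hinit ▸ hηr.le, hη'r.le⟩
end

section
/- Let μ < 0, β = β₋ = 1/2 - √(1/4 - μ) < 0, N ≥ 1, δ₀ > 0. Suppose v : (0, δ₀/2) → ℝ is positive and satisfies (σ v')' = β σ (N-1) v /((δ₀ - δ) δ) on (0, δ₀/2), where σ(δ) = δ^{2β}(δ₀ - δ)^{N-1}. Then (σ v')' ≤ 0, i.e. σ v' is nonincreasing, and consequently for 0 < ε < δ < δ₀/2: v(ε) ≤ v(δ) - σ(δ) v'(δ) ∫_ε^δ σ(s)^{-1} ds; in particular v is bounded as ε → 0⁺. -/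
/-!
For `β < 0` and `N ≥ 1` the right-hand side `βσ(N-1)v/((δ₀-δ)δ)` of the equation is `≤ 0`
wherever `v > 0`, so the flux `σv'` is nonincreasing. Comparing `v'(s) ≥ σ(δ)v'(δ)/σ(s)` for
`s ≤ δ` and integrating from `ε` to `δ` gives the integral inequality. For boundedness, the
weight `σ` is itself nonincreasing (both of its factors are), so `σ(δ)∫_ε^δ σ⁻¹ ≤ δ`.
-/

open Set

lemma rpow_mul_sub_rpow_pos {a p δ₀ s : ℝ} (hs : 0 < s) (hsδ₀ : s < δ₀) :
    0 < s ^ a * (δ₀ - s) ^ p :=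
  mul_pos (Real.rpow_pos_of_pos hs a) (Real.rpow_pos_of_pos (sub_pos.2 hsδ₀) p)

lemma differentiableAt_rpow_mul_sub_rpow {a p δ₀ s : ℝ} (hs : 0 < s) (hsδ₀ : s < δ₀) :
    DifferentiableAt ℝ (fun t => t ^ a * (δ₀ - t) ^ p) s :=
  (Real.differentiableAt_rpow_const_of_ne a hs.ne').mul
    ((differentiableAt_const δ₀).sub differentiableAt_id |>.rpow_const
      (Or.inl (sub_pos.2 hsδ₀).ne'))

lemma antitoneOn_rpow_mul_sub_rpow {a p δ₀ : ℝ} (ha : a ≤ 0) (hp : 0 ≤ p) :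
    AntitoneOn (fun t => t ^ a * (δ₀ - t) ^ p) (Ioo 0 δ₀) := by
  intro s hs t ht hst
  exact mul_le_mul (Real.rpow_le_rpow_of_nonpos hs.1 hst ha)
    (Real.rpow_le_rpow (sub_pos.2 ht.2).le (by linarith) hp)
    (Real.rpow_pos_of_pos (sub_pos.2 ht.2) p).le (Real.rpow_pos_of_pos hs.1 a).le

lemma antitoneOn_mul_deriv_of_deriv_nonpos {σ f : ℝ → ℝ} {a b : ℝ}
    (hσ : ∀ x ∈ Ioo a b, DifferentiableAt ℝ σ x) (hf : ContDiffOn ℝ 2 f (Ioo a b))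
    (hderiv : ∀ x ∈ Ioo a b, deriv (fun t => σ t * deriv f t) x ≤ 0) :
    AntitoneOn (fun t => σ t * deriv f t) (Ioo a b) := by
  have hf' : DifferentiableOn ℝ (deriv f) (Ioo a b) :=
    (hf.deriv_of_isOpen isOpen_Ioo (by norm_num : (1 : WithTop ℕ∞) + 1 ≤ 2)).differentiableOn
      one_ne_zero
  have hdiff : ∀ x ∈ Ioo a b, DifferentiableAt ℝ (fun t => σ t * deriv f t) x := fun x hx =>
    (hσ x hx).mul ((hf' x hx).differentiableAt (isOpen_Ioo.mem_nhds hx))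
  apply antitoneOn_of_deriv_nonpos (convex_Ioo a b)
    (fun x hx => (hdiff x hx).continuousAt.continuousWithinAt)
  all_goals rw [interior_Ioo]
  · exact fun x hx => (hdiff x hx).differentiableWithinAt
  · exact hderiv

lemma le_sub_mul_integral_inv_of_antitoneOn {f σ : ℝ → ℝ} {a b : ℝ} (hab : a ≤ b)
    (hf : ∀ x ∈ Icc a b, DifferentiableAt ℝ f x) (hf' : ContinuousOn (deriv f) (Icc a b))
    (hσ : ContinuousOn σ (Icc a b)) (hσpos : ∀ x ∈ Icc a b, 0 < σ x)
    (hflux : AntitoneOn (fun t => σ t * deriv f t) (Icc a b)) :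
    f a ≤ f b - σ b * deriv f b * ∫ s in a..b, (σ s)⁻¹ := by
  rw [← uIcc_of_le hab] at hf hf' hσ
  have hbound : ∀ s ∈ Icc a b, σ b * deriv f b * (σ s)⁻¹ ≤ deriv f s := fun s hs => by
    rw [mul_inv_le_iff₀ (hσpos s hs)]
    linarith [hflux hs (right_mem_Icc.2 hab) hs.2]
  have hint : IntervalIntegrable (fun s => σ b * deriv f b * (σ s)⁻¹) MeasureTheory.volume a b :=
    (continuousOn_const.mul
      (hσ.inv₀ fun s hs => (hσpos s (uIcc_of_le hab ▸ hs)).ne')).intervalIntegrable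
  have hmono := intervalIntegral.integral_mono_on hab hint hf'.intervalIntegrable hbound
  rw [intervalIntegral.integral_const_mul,
    intervalIntegral.integral_deriv_eq_sub hf hf'.intervalIntegrable] at hmono
  linarith

lemma mul_integral_inv_le_of_antitoneOn {σ : ℝ → ℝ} {a b : ℝ} (hab : a ≤ b) (hσb : 0 < σ b)
    (hσ : AntitoneOn σ (Icc a b)) :
    σ b * ∫ s in a..b, (σ s)⁻¹ ≤ b - a := by
  have hσpos : ∀ s ∈ Icc a b, 0 < σ s := fun s hs =>
    hσb.trans_le (hσ hs (right_mem_Icc.2 hab) hs.2)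
  have hinv : MonotoneOn (fun s => (σ s)⁻¹) (uIcc a b) := by
    rw [uIcc_of_le hab]
    intro s hs t ht hst
    exact inv_anti₀ (hσpos t ht) (hσ hs ht hst)
  have hle : ∫ s in a..b, (σ s)⁻¹ ≤ ∫ _ in a..b, (σ b)⁻¹ :=
    intervalIntegral.integral_mono_on hab hinv.intervalIntegrable intervalIntegrable_const
      fun s hs => inv_anti₀ hσb (hσ hs (right_mem_Icc.2 hab) hs.2)
  rw [intervalIntegral.integral_const, smul_eq_mul] at hle
  calc σ b * ∫ s in a..b, (σ s)⁻¹ ≤ σ b * ((b - a) * (σ b)⁻¹) := by gcongr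
    _ = b - a := by field_simp

lemma le_add_abs_deriv_mul_of_le_sub_mul_integral_inv {f σ : ℝ → ℝ} {a c : ℝ}
    (hσ : AntitoneOn σ (Ioc a c)) (hσc : 0 < σ c)
    (hf : ∀ ε ∈ Ioo a c, f ε ≤ f c - σ c * deriv f c * ∫ s in ε..c, (σ s)⁻¹) :
    ∀ ε ∈ Ioo a c, f ε ≤ f c + |deriv f c| * (c - a) := by
  intro ε hε
  have hsub : Icc ε c ⊆ Ioc a c := Icc_subset_Ioc_iff hε.2.le |>.2 ⟨hε.1, le_rfl⟩
  have hJ_nonneg : 0 ≤ σ c * ∫ s in ε..c, (σ s)⁻¹ :=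
    mul_nonneg hσc.le (intervalIntegral.integral_nonneg hε.2.le fun s hs =>
      (inv_pos.2 (hσc.trans_le (hσ (hsub hs) (right_mem_Ioc.2 (hε.1.trans hε.2)) hs.2))).le)
  have hJ_le := mul_integral_inv_le_of_antitoneOn hε.2.le hσc (hσ.mono hsub)
  calc f ε ≤ f c - deriv f c * (σ c * ∫ s in ε..c, (σ s)⁻¹) := (hf ε hε).trans_eq (by ring)
    _ ≤ f c + |deriv f c| * (c - a) := by
        nlinarith [neg_abs_le (deriv f c), abs_nonneg (deriv f c), hε.1]

theorem stmt10_general (N : ℕ) (hN : 1 ≤ N) (δ₀ β : ℝ) (hδ₀ : 0 < δ₀)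
    (hβneg : β < 0)
    (σ v : ℝ → ℝ)
    (hσ : σ = fun δ : ℝ => δ ^ (2*β) * (δ₀ - δ) ^ ((N:ℝ) - 1))
    (hvpos : ∀ δ ∈ Set.Ioo (0:ℝ) (δ₀/2), 0 < v δ)
    (hreg : ContDiffOn ℝ 2 v (Set.Ioo (0:ℝ) (δ₀/2)))
    (hode : ∀ δ ∈ Set.Ioo (0:ℝ) (δ₀/2),
      deriv (fun t => σ t * deriv v t) δ = β * σ δ * ((N:ℝ) - 1) * v δ / ((δ₀ - δ) * δ)) :
    (∀ δ ∈ Set.Ioo (0:ℝ) (δ₀/2), deriv (fun t => σ t * deriv v t) δ ≤ 0) ∧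
    (∀ ε δ : ℝ, 0 < ε → ε < δ → δ < δ₀/2 →
      v ε ≤ v δ - σ δ * deriv v δ * ∫ s in ε..δ, (σ s)⁻¹) ∧
    (∃ M : ℝ, ∀ ε ∈ Set.Ioo (0:ℝ) (δ₀/4), v ε ≤ M) := by
  set I := Ioo (0:ℝ) (δ₀/2)
  have hI : I ⊆ Ioo 0 δ₀ := Ioo_subset_Ioo_right (by linarith)
  have hN1 : 0 ≤ (N:ℝ) - 1 := sub_nonneg.2 (Nat.one_le_cast.2 hN)
  have hσpos : ∀ s ∈ I, 0 < σ s := fun s hs => hσ ▸ rpow_mul_sub_rpow_pos (hI hs).1 (hI hs).2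
  have hσdiff : ∀ s ∈ I, DifferentiableAt ℝ σ s := fun s hs =>
    hσ ▸ differentiableAt_rpow_mul_sub_rpow (hI hs).1 (hI hs).2
  have hσanti : AntitoneOn σ I := hσ ▸ (antitoneOn_rpow_mul_sub_rpow (by linarith) hN1).mono hI
  have hflux_deriv : ∀ δ ∈ I, deriv (fun t => σ t * deriv v t) δ ≤ 0 := fun δ hδ => by
    rw [hode δ hδ]
    refine div_nonpos_of_nonpos_of_nonneg ?_ (mul_pos (by linarith [hδ.2]) hδ.1).le
    exact mul_nonpos_of_nonpos_of_nonneg (mul_nonpos_of_nonpos_of_nonneg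
      (mul_nonpos_of_nonpos_of_nonneg hβneg.le (hσpos δ hδ).le) hN1) (hvpos δ hδ).le
  have hflux := antitoneOn_mul_deriv_of_deriv_nonpos hσdiff hreg hflux_deriv
  have hcompare : ∀ ε δ : ℝ, 0 < ε → ε < δ → δ < δ₀/2 →
      v ε ≤ v δ - σ δ * deriv v δ * ∫ s in ε..δ, (σ s)⁻¹ := fun ε δ hε hεδ hδ => by
    have hsub : Icc ε δ ⊆ I := Icc_subset_Ioo hε hδ
    exact le_sub_mul_integral_inv_of_antitoneOn hεδ.le
      (fun s hs => (hreg.differentiableOn (by norm_num) s (hsub hs)).differentiableAt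
        (isOpen_Ioo.mem_nhds (hsub hs)))
      ((hreg.continuousOn_deriv_of_isOpen isOpen_Ioo (by norm_num)).mono hsub)
      (fun s hs => (hσdiff s (hsub hs)).continuousAt.continuousWithinAt)
      (fun s hs => hσpos s (hsub hs)) (hflux.mono hsub)
  have hc : δ₀/4 ∈ I := ⟨by linarith, by linarith⟩
  exact ⟨hflux_deriv, hcompare, _, le_add_abs_deriv_mul_of_le_sub_mul_integral_inv
    (hσanti.mono (Ioc_subset_Ioo_right hc.2)) (hσpos _ hc)
    fun ε hε => hcompare ε _ hε.1 hε.2 hc.2⟩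

/-- For `μ < 0`, `β = β₋ < 0`, a positive solution `v` of
`(σv')' = βσ(N-1)v/((δ₀-δ)δ)` with `σ(δ) = δ^{2β}(δ₀-δ)^{N-1}` has `σv'` nonincreasing,
satisfies `v(ε) ≤ v(δ) - σ(δ)v'(δ)∫_ε^δ σ⁻¹`, and is bounded as `ε → 0⁺`. -/
theorem stmt10 (N : ℕ) (hN : 1 ≤ N) (δ₀ μ β : ℝ) (hδ₀ : 0 < δ₀) (hμ : μ < 0)
    (hβ : β = 1/2 - Real.sqrt (1/4 - μ)) (hβneg : β < 0)
    (σ v : ℝ → ℝ)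
    (hσ : σ = fun δ : ℝ => δ ^ (2*β) * (δ₀ - δ) ^ ((N:ℝ) - 1))
    (hvpos : ∀ δ ∈ Set.Ioo (0:ℝ) (δ₀/2), 0 < v δ)
    (hreg : ContDiffOn ℝ 2 v (Set.Ioo (0:ℝ) (δ₀/2)))
    (hode : ∀ δ ∈ Set.Ioo (0:ℝ) (δ₀/2),
      deriv (fun t => σ t * deriv v t) δ = β * σ δ * ((N:ℝ) - 1) * v δ / ((δ₀ - δ) * δ)) :
    (∀ δ ∈ Set.Ioo (0:ℝ) (δ₀/2), deriv (fun t => σ t * deriv v t) δ ≤ 0) ∧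
    (∀ ε δ : ℝ, 0 < ε → ε < δ → δ < δ₀/2 →
      v ε ≤ v δ - σ δ * deriv v δ * ∫ s in ε..δ, (σ s)⁻¹) ∧
    (∃ M : ℝ, ∀ ε ∈ Set.Ioo (0:ℝ) (δ₀/4), v ε ≤ M) :=
  stmt10_general N hN δ₀ β hδ₀ hβneg σ v hσ hvpos hreg hode
end

section
/- Let h be harmonic in a strip Ω_{δ₀} with |h|, |∇h| bounded, μ < 1/4, μ ≠ 0, β = β₋, and let α ∈ (0,1) with α < 1 - 2β if β > 0. Then there exists δ₁ ∈ (0, δ₀] such that for every A > 1, the function w̄ = h + A δ^α satisfies Δw̄ + (2β/δ)⟨∇δ, ∇w̄⟩ + (β Δδ/δ) w̄ ≤ 0 in Ω_{δ₁}; hence δ^β w̄ is a local super-harmonic function (Δ + μ/δ²)(δ^β w̄) ≤ 0. -/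
open RealInnerProductSpace

/-- The Laplacian of `f : ℝᴺ → ℝ`, as the sum of the second partial derivatives. -/
noncomputable def lap {N : ℕ} (f : EuclideanSpace ℝ (Fin N) → ℝ)
    (x : EuclideanSpace ℝ (Fin N)) : ℝ :=
  ∑ i : Fin N, fderiv ℝ (fun y => fderiv ℝ f y (EuclideanSpace.single i 1)) x
    (EuclideanSpace.single i 1)

/-!
For `w = h + A δ^α`, the product and chain rules together with `|∇δ| = 1` and `Δh = 0` give
`Δw + (2β/δ)⟨∇δ,∇w⟩ + (βΔδ/δ)w`
`  = A δ^(α-2) (α(α+2β-1) + (α+β) δ Δδ) + (β/δ)(2⟨∇δ,∇h⟩ + Δδ h)`.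
Since `α + 2β - 1 < 0`, the leading term is `-A c δ^(α-2)` with `c > 0`, and the bounds on
`Δδ`, `h`, `∇h` make the rest at most `A δ^(α-2) (a δ + b δ^(1-α))` for `A ≥ 1`; this is
negative once `δ` is small, uniformly in `A`. The second inequality is the first one multiplied
by `δ^β`: when `|∇δ| = 1` and `μ = β - β²` (which is how `β` is chosen),
`Δ(δ^β w) + μ δ^(β-2) w = δ^β (Δw + (2β/δ)⟨∇δ,∇w⟩ + (βΔδ/δ)w)`.
-/

open Filter Topology

noncomputable def secondDirDeriv {E : Type*} [NormedAddCommGroup E] [NormedSpace ℝ E]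
    (f : E → ℝ) (v x : E) : ℝ :=
  fderiv ℝ (fun y => fderiv ℝ f y v) x v

section SecondDirDeriv

variable {E : Type*} [NormedAddCommGroup E] [NormedSpace ℝ E] {f g : E → ℝ} {x : E}

theorem ContDiffAt.differentiableAt_fderiv_apply (hf : ContDiffAt ℝ 2 f x) (v : E) :
    DifferentiableAt ℝ (fun y => fderiv ℝ f y v) x :=
  ((hf.fderiv_right (by norm_num)).clm_apply contDiffAt_const).differentiableAt one_ne_zero

theorem ContDiffAt.eventually_differentiableAt (hf : ContDiffAt ℝ 2 f x) :
    ∀ᶠ y in 𝓝 x, DifferentiableAt ℝ f y :=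
  (hf.eventually (by simp)).mono fun _ hy => hy.differentiableAt (by norm_num)

theorem fderiv_rpow_const_apply (hf : DifferentiableAt ℝ f x) (hx : f x ≠ 0) (c : ℝ) (v : E) :
    fderiv ℝ (fun y => f y ^ c) x v = c * f x ^ (c - 1) * fderiv ℝ f x v := by
  rw [(hf.hasFDerivAt.rpow_const (Or.inl hx)).fderiv]
  simp [mul_assoc]

theorem secondDirDeriv_add (hf : ContDiffAt ℝ 2 f x) (hg : ContDiffAt ℝ 2 g x) (v : E) :
    secondDirDeriv (fun y => f y + g y) v x = secondDirDeriv f v x + secondDirDeriv g v x := by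
  have hD : (fun y => fderiv ℝ (fun z => f z + g z) y v) =ᶠ[𝓝 x]
      fun y => fderiv ℝ f y v + fderiv ℝ g y v := by
    filter_upwards [hf.eventually_differentiableAt, hg.eventually_differentiableAt]
      with y hfy hgy
    rw [fderiv_fun_add hfy hgy]
    rfl
  rw [secondDirDeriv, hD.fderiv_eq,
    fderiv_fun_add (hf.differentiableAt_fderiv_apply v) (hg.differentiableAt_fderiv_apply v)]
  rfl

theorem secondDirDeriv_const_mul (hf : ContDiffAt ℝ 2 f x) (c : ℝ) (v : E) :
    secondDirDeriv (fun y => c * f y) v x = c * secondDirDeriv f v x := by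
  have hD : (fun y => fderiv ℝ (fun z => c * f z) y v) =ᶠ[𝓝 x]
      fun y => c * fderiv ℝ f y v := by
    filter_upwards [hf.eventually_differentiableAt] with y hfy
    rw [fderiv_const_mul hfy]
    rfl
  rw [secondDirDeriv, hD.fderiv_eq, fderiv_const_mul (hf.differentiableAt_fderiv_apply v)]
  rfl

theorem secondDirDeriv_mul (hf : ContDiffAt ℝ 2 f x) (hg : ContDiffAt ℝ 2 g x) (v : E) :
    secondDirDeriv (fun y => f y * g y) v x
      = g x * secondDirDeriv f v x + 2 * (fderiv ℝ f x v * fderiv ℝ g x v)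
        + f x * secondDirDeriv g v x := by
  have hf1 := hf.differentiableAt (by norm_num)
  have hg1 := hg.differentiableAt (by norm_num)
  have hD : (fun y => fderiv ℝ (fun z => f z * g z) y v) =ᶠ[𝓝 x]
      fun y => f y * fderiv ℝ g y v + g y * fderiv ℝ f y v := by
    filter_upwards [hf.eventually_differentiableAt, hg.eventually_differentiableAt]
      with y hfy hgy
    rw [fderiv_fun_mul hfy hgy]
    simp
  rw [secondDirDeriv, hD.fderiv_eq,
    fderiv_fun_add (hf1.fun_mul (hg.differentiableAt_fderiv_apply v))
      (hg1.fun_mul (hf.differentiableAt_fderiv_apply v)),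
    fderiv_fun_mul hf1 (hg.differentiableAt_fderiv_apply v),
    fderiv_fun_mul hg1 (hf.differentiableAt_fderiv_apply v)]
  simp only [add_apply, smul_apply, smul_eq_mul,
    secondDirDeriv]
  ring

theorem secondDirDeriv_rpow_const (hf : ContDiffAt ℝ 2 f x) (hx : f x ≠ 0) (c : ℝ) (v : E) :
    secondDirDeriv (fun y => f y ^ c) v x
      = c * (c - 1) * f x ^ (c - 2) * fderiv ℝ f x v ^ 2
        + c * f x ^ (c - 1) * secondDirDeriv f v x := by
  have hf1 := hf.differentiableAt (by norm_num)
  have hD : (fun y => fderiv ℝ (fun z => f z ^ c) y v) =ᶠ[𝓝 x]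
      fun y => c * f y ^ (c - 1) * fderiv ℝ f y v := by
    filter_upwards [hf.eventually_differentiableAt, hf.continuousAt.eventually_ne hx]
      with y hfy hy
    exact fderiv_rpow_const_apply hfy hy c v
  have hpow := hf1.rpow_const (p := c - 1) (Or.inl hx)
  rw [secondDirDeriv, hD.fderiv_eq,
    fderiv_fun_mul (hpow.const_mul c) (hf.differentiableAt_fderiv_apply v),
    fderiv_const_mul hpow]
  simp only [add_apply, smul_apply, smul_eq_mul,
    fderiv_rpow_const_apply hf1 hx, secondDirDeriv, show c - 1 - 1 = c - 2 by ring]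
  ring

end SecondDirDeriv

section Laplacian

variable {N : ℕ} {f g : EuclideanSpace ℝ (Fin N) → ℝ} {x : EuclideanSpace ℝ (Fin N)}

theorem lap_eq_sum_secondDirDeriv (f : EuclideanSpace ℝ (Fin N) → ℝ)
    (x : EuclideanSpace ℝ (Fin N)) :
    lap f x = ∑ i, secondDirDeriv f (EuclideanSpace.single i 1) x :=
  rfl

theorem sum_fderiv_mul_fderiv_single (f g : EuclideanSpace ℝ (Fin N) → ℝ)
    (x : EuclideanSpace ℝ (Fin N)) :
    ∑ i, fderiv ℝ f x (EuclideanSpace.single i 1) * fderiv ℝ g x (EuclideanSpace.single i 1)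
      = ⟪gradient f x, gradient g x⟫ := by
  simp only [← inner_gradient_left, PiLp.inner_apply]
  simp [mul_comm]

theorem lap_add (hf : ContDiffAt ℝ 2 f x) (hg : ContDiffAt ℝ 2 g x) :
    lap (fun y => f y + g y) x = lap f x + lap g x := by
  simp only [lap_eq_sum_secondDirDeriv, secondDirDeriv_add hf hg, Finset.sum_add_distrib]

theorem lap_const_mul (hf : ContDiffAt ℝ 2 f x) (c : ℝ) :
    lap (fun y => c * f y) x = c * lap f x := by
  simp only [lap_eq_sum_secondDirDeriv, secondDirDeriv_const_mul hf, Finset.mul_sum]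

theorem lap_mul (hf : ContDiffAt ℝ 2 f x) (hg : ContDiffAt ℝ 2 g x) :
    lap (fun y => f y * g y) x
      = g x * lap f x + 2 * ⟪gradient f x, gradient g x⟫ + f x * lap g x := by
  simp only [lap_eq_sum_secondDirDeriv, secondDirDeriv_mul hf hg, Finset.sum_add_distrib,
    ← Finset.mul_sum, sum_fderiv_mul_fderiv_single]

theorem lap_rpow_const (hf : ContDiffAt ℝ 2 f x) (hx : f x ≠ 0) (c : ℝ) :
    lap (fun y => f y ^ c) x
      = c * (c - 1) * f x ^ (c - 2) * ‖gradient f x‖ ^ 2 + c * f x ^ (c - 1) * lap f x := by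
  simp only [lap_eq_sum_secondDirDeriv, secondDirDeriv_rpow_const hf hx, Finset.sum_add_distrib,
    ← Finset.mul_sum, sq (fderiv ℝ f x _), sum_fderiv_mul_fderiv_single,
    real_inner_self_eq_norm_sq]

end Laplacian

section WeightedLaplacian

variable {N : ℕ} {δ h w : EuclideanSpace ℝ (Fin N) → ℝ} {x : EuclideanSpace ℝ (Fin N)}

noncomputable def weightedLap (β : ℝ) (δ w : EuclideanSpace ℝ (Fin N) → ℝ)
    (x : EuclideanSpace ℝ (Fin N)) : ℝ :=
  lap w x + 2 * β / δ x * ⟪gradient δ x, gradient w x⟫ + β * lap δ x / δ x * w x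

theorem lap_rpow_mul_add_div_sq (hδ : ContDiffAt ℝ 2 δ x) (hd : 0 < δ x)
    (hgrad : ‖gradient δ x‖ = 1) (hw : ContDiffAt ℝ 2 w x) (β : ℝ) :
    lap (fun y => δ y ^ β * w y) x + (β - β ^ 2) / δ x ^ 2 * (δ x ^ β * w x)
      = δ x ^ β * weightedLap β δ w x := by
  have hgradρ : ⟪gradient (fun y => δ y ^ β) x, gradient w x⟫
      = β * δ x ^ (β - 1) * ⟪gradient δ x, gradient w x⟫ := by
    simp only [inner_gradient_left]
    exact fderiv_rpow_const_apply (hδ.differentiableAt (by norm_num)) hd.ne' β _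
  rw [weightedLap, lap_mul (hδ.rpow_const_of_ne hd.ne') hw, lap_rpow_const hδ hd.ne', hgradρ,
    hgrad, Real.rpow_sub hd, Real.rpow_sub hd, Real.rpow_one, Real.rpow_two]
  field_simp
  ring

theorem weightedLap_add_const_mul_rpow (hδ : ContDiffAt ℝ 2 δ x) (hd : 0 < δ x)
    (hgrad : ‖gradient δ x‖ = 1) (hh : ContDiffAt ℝ 2 h x) (A α β : ℝ) :
    weightedLap β δ (fun y => h y + A * δ y ^ α) x
      = weightedLap β δ h x
        + A * δ x ^ (α - 2) * (α * (α + 2 * β - 1) + (α + β) * δ x * lap δ x) := by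
  have hρ := hδ.rpow_const_of_ne (p := α) hd.ne'
  have hδ1 := hδ.differentiableAt (by norm_num)
  have hgradw : ⟪gradient δ x, gradient (fun y => h y + A * δ y ^ α) x⟫
      = ⟪gradient δ x, gradient h x⟫ + A * α * δ x ^ (α - 1) := by
    rw [real_inner_comm, inner_gradient_left, real_inner_comm, inner_gradient_left,
      fderiv_fun_add (hh.differentiableAt (by norm_num))
        ((hρ.differentiableAt (by norm_num)).const_mul A),
      fderiv_const_mul (hρ.differentiableAt (by norm_num))]
    simp only [add_apply, smul_apply, smul_eq_mul, fderiv_rpow_const_apply hδ1 hd.ne',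
      ← inner_gradient_left, real_inner_self_eq_norm_sq, hgrad]
    ring
  rw [weightedLap, weightedLap, lap_add hh (contDiffAt_const.mul hρ), lap_const_mul hρ,
    lap_rpow_const hδ hd.ne', hgrad, hgradw, Real.rpow_sub hd, Real.rpow_sub hd,
    Real.rpow_one, Real.rpow_two]
  field_simp
  ring

theorem weightedLap_mul_le_of_lap_eq_zero (hd : 0 < δ x) (hgrad : ‖gradient δ x‖ = 1)
    (hharm : lap h x = 0) {Cδ Ch β : ℝ} (hlapδ : |lap δ x| ≤ Cδ) (hhx : |h x| ≤ Ch)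
    (hgradh : ‖gradient h x‖ ≤ Ch) :
    weightedLap β δ h x * δ x ≤ |β| * Ch * (2 + Cδ) := by
  have hinner : |⟪gradient δ x, gradient h x⟫| ≤ Ch :=
    calc |⟪gradient δ x, gradient h x⟫| ≤ ‖gradient δ x‖ * ‖gradient h x‖ :=
          abs_real_inner_le_norm _ _
      _ ≤ Ch := by rw [hgrad, one_mul]; exact hgradh
  calc weightedLap β δ h x * δ x
      = β * (2 * ⟪gradient δ x, gradient h x⟫ + lap δ x * h x) := by
        rw [weightedLap, hharm]; field_simp; ring
    _ ≤ |β| * (2 * |⟪gradient δ x, gradient h x⟫| + |lap δ x| * |h x|) := by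
        refine (le_abs_self _).trans ?_
        rw [abs_mul]
        gcongr
        refine (abs_add_le _ _).trans ?_
        rw [abs_mul, abs_mul, abs_two]
    _ ≤ |β| * Ch * (2 + Cδ) := by
        have : |lap δ x| * |h x| ≤ Cδ * Ch := by
          gcongr
          exact (abs_nonneg _).trans hlapδ
        nlinarith [abs_nonneg β]

theorem weightedLap_add_const_mul_rpow_nonpos (hδ : ContDiffAt ℝ 2 δ x) (hd : 0 < δ x)
    (hgrad : ‖gradient δ x‖ = 1) (hh : ContDiffAt ℝ 2 h x) (hharm : lap h x = 0)
    {Cδ Ch A α β : ℝ} (hlapδ : |lap δ x| ≤ Cδ) (hhx : |h x| ≤ Ch)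
    (hgradh : ‖gradient h x‖ ≤ Ch) (hA : 1 ≤ A) (hα : 0 < α)
    (hsmall : (α + |β|) * Cδ * δ x + |β| * Ch * (2 + Cδ) * δ x ^ (1 - α)
      < α * (1 - α - 2 * β)) :
    weightedLap β δ (fun y => h y + A * δ y ^ α) x ≤ 0 := by
  have hb : 0 ≤ |β| * Ch * (2 + Cδ) := by
    have := (abs_nonneg _).trans hlapδ
    have := (abs_nonneg _).trans hhx
    positivity
  have hlin : (α + β) * lap δ x ≤ (α + |β|) * Cδ :=
    calc (α + β) * lap δ x ≤ |α + β| * |lap δ x| := by rw [← abs_mul]; exact le_abs_self _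
      _ ≤ (α + |β|) * Cδ := by
          gcongr
          exact (abs_add_le _ _).trans_eq (by rw [abs_of_pos hα])
  have hρ : 0 ≤ δ x ^ (1 - α) := Real.rpow_nonneg hd.le _
  have hfactor : ∀ W : ℝ,
      W + A * δ x ^ (α - 2) * (α * (α + 2 * β - 1) + (α + β) * δ x * lap δ x)
        = δ x ^ (α - 2) * (W * δ x * δ x ^ (1 - α)
          + A * (α * (α + 2 * β - 1) + (α + β) * lap δ x * δ x)) := by
    intro W
    rw [Real.rpow_sub hd, Real.rpow_sub hd, Real.rpow_one, Real.rpow_two]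
    field_simp
  rw [weightedLap_add_const_mul_rpow hδ hd hgrad hh, hfactor]
  refine mul_nonpos_of_nonneg_of_nonpos (Real.rpow_nonneg hd.le _) ?_
  have hharmonic := mul_le_mul_of_nonneg_right
    (weightedLap_mul_le_of_lap_eq_zero hd hgrad hharm hlapδ hhx hgradh (β := β)) hρ
  have hA_mul : |β| * Ch * (2 + Cδ) * δ x ^ (1 - α)
      ≤ A * (|β| * Ch * (2 + Cδ) * δ x ^ (1 - α)) :=
    le_mul_of_one_le_left (by positivity) hA
  have hlin_mul : A * ((α + β) * lap δ x * δ x) ≤ A * ((α + |β|) * Cδ * δ x) := by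
    gcongr
  nlinarith [mul_lt_mul_of_pos_left hsmall (one_pos.trans_le hA)]

end WeightedLaplacian

theorem exists_forall_mul_add_mul_rpow_lt (a b : ℝ) {p c δ₀ : ℝ} (hp : 0 < p) (hc : 0 < c)
    (hδ₀ : 0 < δ₀) :
    ∃ δ₁ ∈ Set.Ioc 0 δ₀, ∀ t ∈ Set.Ioo 0 δ₁, a * t + b * t ^ p < c := by
  have hlim : Tendsto (fun t : ℝ => a * t + b * t ^ p) (𝓝 0) (𝓝 0) := by
    have hcont : Continuous fun t : ℝ => a * t + b * t ^ p := by
      fun_prop (disch := exact hp.le)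
    simpa [Real.zero_rpow hp.ne'] using hcont.tendsto 0
  obtain ⟨ε, hε, hball⟩ := Metric.eventually_nhds_iff.mp (hlim.eventually (gt_mem_nhds hc))
  refine ⟨min δ₀ ε, ⟨lt_min hδ₀ hε, min_le_left _ _⟩, fun t ht => hball ?_⟩
  rw [Real.dist_eq, sub_zero, abs_of_pos ht.1]
  exact ht.2.trans_le (min_le_right _ _)

theorem Metric.infDist_frontier_pos_of_gradient_ne_zero {E : Type*} [NormedAddCommGroup E]
    [InnerProductSpace ℝ E] [CompleteSpace E] {Ω : Set E} (hΩ : IsOpen Ω) {x : E}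
    (hx : x ∈ Ω)
    (hgrad : gradient (fun y => Metric.infDist y (frontier Ω)) x ≠ 0) :
    0 < Metric.infDist x (frontier Ω) := by
  rcases (frontier Ω).eq_empty_or_nonempty with hempty | hne
  · simp [hempty] at hgrad
  · exact (isClosed_frontier.notMem_iff_infDist_pos hne).mp
      fun hfr => (hΩ.frontier_eq ▸ hfr).2 hx

theorem stmt14_general {N : ℕ} (Ω : Set (EuclideanSpace ℝ (Fin N)))
    (hΩ : IsOpen Ω)
    (δ : EuclideanSpace ℝ (Fin N) → ℝ)
    (hδ : δ = fun x => Metric.infDist x (frontier Ω))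
    (μ β α δ₀ : ℝ) (hμ : μ < 1/4)
    (hβ : β = 1/2 - Real.sqrt (1/4 - μ))
    (hα0 : 0 < α) (hα1 : α < 1) (hα2 : 0 < β → α < 1 - 2*β) (hδ₀ : 0 < δ₀)
    (hregδ : ContDiffOn ℝ 2 δ {x ∈ Ω | δ x < δ₀})
    (hgradδ : ∀ x ∈ {x ∈ Ω | δ x < δ₀}, ‖gradient δ x‖ = 1)
    (Cδ : ℝ) (hΔδbd : ∀ x ∈ {x ∈ Ω | δ x < δ₀}, |lap δ x| ≤ Cδ)
    (h : EuclideanSpace ℝ (Fin N) → ℝ)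
    (hregh : ContDiffOn ℝ 2 h {x ∈ Ω | δ x < δ₀})
    (hharm : ∀ x ∈ {x ∈ Ω | δ x < δ₀}, lap h x = 0)
    (Ch : ℝ) (hhbd : ∀ x ∈ {x ∈ Ω | δ x < δ₀}, |h x| ≤ Ch ∧ ‖gradient h x‖ ≤ Ch) :
    ∃ δ₁ ∈ Set.Ioc (0:ℝ) δ₀, ∀ A : ℝ, 1 < A →
      ∀ x ∈ {x ∈ Ω | δ x < δ₁},
        (lap (fun y => h y + A * δ y ^ α) x
          + 2 * β / δ x * ⟪gradient δ x, gradient (fun y => h y + A * δ y ^ α) x⟫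
          + β * lap δ x / δ x * (h x + A * δ x ^ α) ≤ 0) ∧
        (lap (fun y => δ y ^ β * (h y + A * δ y ^ α)) x
          + μ / (δ x)^2 * (δ x ^ β * (h x + A * δ x ^ α)) ≤ 0) := by
  have hsqrt : 0 < Real.sqrt (1/4 - μ) := Real.sqrt_pos.mpr (by linarith)
  have hμβ : μ = β - β ^ 2 := by
    rw [hβ]; linear_combination (Real.sq_sqrt (by linarith : (0:ℝ) ≤ 1/4 - μ))
  have hc : 0 < α * (1 - α - 2 * β) := by
    refine mul_pos hα0 ?_
    rcases le_or_gt β 0 with hβ0 | hβ0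
    · linarith
    · linarith [hα2 hβ0]
  obtain ⟨δ₁, ⟨hδ₁, hδ₁δ₀⟩, hsmall⟩ := exists_forall_mul_add_mul_rpow_lt
    ((α + |β|) * Cδ) (|β| * Ch * (2 + Cδ)) (sub_pos.mpr hα1) hc hδ₀
  have hstrip : IsOpen {x ∈ Ω | δ x < δ₀} :=
    hΩ.inter (isOpen_lt (hδ ▸ Metric.continuous_infDist_pt _) continuous_const)
  refine ⟨δ₁, ⟨hδ₁, hδ₁δ₀⟩, fun A hA x ⟨hxΩ, hxδ₁⟩ => ?_⟩
  have hx : x ∈ {x ∈ Ω | δ x < δ₀} := ⟨hxΩ, hxδ₁.trans_le hδ₁δ₀⟩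
  have hd : 0 < δ x := by
    have hgrad := hgradδ x hx
    rw [hδ] at hgrad ⊢
    exact Metric.infDist_frontier_pos_of_gradient_ne_zero hΩ hxΩ
      (norm_ne_zero_iff.mp (hgrad ▸ one_ne_zero))
  have hδx : ContDiffAt ℝ 2 δ x := hregδ.contDiffAt (hstrip.mem_nhds hx)
  have hhx : ContDiffAt ℝ 2 h x := hregh.contDiffAt (hstrip.mem_nhds hx)
  have hsuper : weightedLap β δ (fun y => h y + A * δ y ^ α) x ≤ 0 :=
    weightedLap_add_const_mul_rpow_nonpos hδx hd (hgradδ x hx) hhx (hharm x hx) (hΔδbd x hx)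
      (hhbd x hx).1 (hhbd x hx).2 hA.le hα0 (hsmall (δ x) ⟨hd, hxδ₁⟩)
  refine ⟨hsuper, ?_⟩
  have hconj := lap_rpow_mul_add_div_sq (w := fun y => h y + A * δ y ^ α) hδx hd (hgradδ x hx)
    (hhx.add (contDiffAt_const.mul (hδx.rpow_const_of_ne hd.ne'))) β
  rw [← hμβ] at hconj
  rw [hconj]
  exact mul_nonpos_of_nonneg_of_nonpos (Real.rpow_nonneg hd.le _) hsuper

/-- For `h` harmonic and bounded with bounded gradient in a boundary strip, there is
`δ₁ ∈ (0, δ₀]` such that for every `A > 1` the function `w̄ = h + Aδ^α` satisfies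
`Δw̄ + (2β/δ)⟨∇δ,∇w̄⟩ + (βΔδ/δ)w̄ ≤ 0` in `Ω_{δ₁}`; hence `δ^β w̄` is a local
super-harmonic: `Δ(δ^β w̄) + μ(δ^β w̄)/δ² ≤ 0`. -/
theorem stmt14 {N : ℕ} (Ω : Set (EuclideanSpace ℝ (Fin N)))
    (hΩ : IsOpen Ω) (hΩb : Bornology.IsBounded Ω)
    (δ : EuclideanSpace ℝ (Fin N) → ℝ)
    (hδ : δ = fun x => Metric.infDist x (frontier Ω))
    (μ β α δ₀ : ℝ) (hμ : μ < 1/4) (hμ0 : μ ≠ 0)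
    (hβ : β = 1/2 - Real.sqrt (1/4 - μ))
    (hα0 : 0 < α) (hα1 : α < 1) (hα2 : 0 < β → α < 1 - 2*β) (hδ₀ : 0 < δ₀)
    (hregδ : ContDiffOn ℝ 2 δ {x ∈ Ω | δ x < δ₀})
    (hgradδ : ∀ x ∈ {x ∈ Ω | δ x < δ₀}, ‖gradient δ x‖ = 1)
    (Cδ : ℝ) (hΔδbd : ∀ x ∈ {x ∈ Ω | δ x < δ₀}, |lap δ x| ≤ Cδ)
    (h : EuclideanSpace ℝ (Fin N) → ℝ)
    (hregh : ContDiffOn ℝ 2 h {x ∈ Ω | δ x < δ₀})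
    (hharm : ∀ x ∈ {x ∈ Ω | δ x < δ₀}, lap h x = 0)
    (Ch : ℝ) (hhbd : ∀ x ∈ {x ∈ Ω | δ x < δ₀}, |h x| ≤ Ch ∧ ‖gradient h x‖ ≤ Ch) :
    ∃ δ₁ ∈ Set.Ioc (0:ℝ) δ₀, ∀ A : ℝ, 1 < A →
      ∀ x ∈ {x ∈ Ω | δ x < δ₁},
        (lap (fun y => h y + A * δ y ^ α) x
          + 2 * β / δ x * ⟪gradient δ x, gradient (fun y => h y + A * δ y ^ α) x⟫
          + β * lap δ x / δ x * (h x + A * δ x ^ α) ≤ 0) ∧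
        (lap (fun y => δ y ^ β * (h y + A * δ y ^ α)) x
          + μ / (δ x)^2 * (δ x ^ β * (h x + A * δ x ^ α)) ≤ 0) :=
  stmt14_general Ω hΩ δ hδ μ β α δ₀ hμ hβ hα0 hα1 hα2 hδ₀ hregδ hgradδ Cδ hΔδbd h hregh hharm Ch
    hhbd
end

section
/- Let μ ∈ (0, C_H(Ω)) and suppose the Martin kernel K(x,y) satisfies c⁻¹ δ(x)^{β₊} |x-y|^{2β₋ - N} ≤ K(x,y) ≤ c δ(x)^{β₊} |x-y|^{2β₋ - N} for all x ∈ Ω, y ∈ ∂Ω, with c > 1. If the boundary satisfies |∂Ω ∩ B_{δ(x)/2}(x*)| ≥ ε₀ δ(x)^{N-1} for x in a strip Ω_{δ₀}, then z(x) = ∫_{∂Ω} K(x,y) dS_y satisfies z(x) ≥ c₀ δ(x)^{β₋} in Ω_{δ₀} for some constant c₀ > 0; in particular liminf_{δ(x)→0} z(x)/δ(x)^{β₋} > 0. -/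
/-!
On the boundary patch `S = ∂Ω ∩ B(x*, δ/2)` every `y` satisfies `|x - y| ≤ 3δ/2`, so, the exponent
`2β₋ - N` being nonpositive, the lower kernel estimate gives `K(x, y) ≥ c⁻¹ (3/2)^{2β₋-N} δ^{β₊+2β₋-N}`
there. Integrating over `S` only and using `|S| ≥ ε₀ δ^{N-1}`, the powers of `δ` add up to
`β₊ + 2β₋ - 1 = β₋`.
-/

open MeasureTheory Metric

lemma two_mul_sub_sqrt_sub_natCast_nonpos {N : ℕ} (hN : 1 ≤ N) (s : ℝ) :
    2 * (1/2 - √s) - N ≤ 0 := by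
  have : (1 : ℝ) ≤ N := by exact_mod_cast hN
  linarith [Real.sqrt_nonneg s]

lemma rpow_mul_mul_rpow_mul_rpow {d k p m n : ℝ} (hd : 0 < d) (hk : 0 ≤ k) (hpm : p + m = 1) :
    d ^ p * (k * d) ^ (2 * m - n) * d ^ (n - 1) = k ^ (2 * m - n) * d ^ m := by
  rw [Real.mul_rpow hk hd.le, mul_left_comm, mul_assoc, ← Real.rpow_add hd, ← Real.rpow_add hd]
  congr 2
  linarith

lemma dist_le_three_halves_mul_of_mem_ball {X : Type*} [PseudoMetricSpace X] {x p y : X} {d : ℝ}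
    (hxp : dist x p = d) (hy : y ∈ ball p (d / 2)) : dist x y ≤ 3/2 * d := by
  have := dist_triangle x p y
  rw [mem_ball, dist_comm] at hy
  linarith

lemma ne_of_mem_of_mem_frontier {X : Type*} [TopologicalSpace X] {Ω : Set X} (hΩ : IsOpen Ω)
    {x y : X} (hx : x ∈ Ω) (hy : y ∈ frontier Ω) : x ≠ y :=
  ne_of_mem_of_not_mem hx (Set.disjoint_left.1 (disjoint_frontier_iff_isOpen.2 hΩ) hy)

lemma rpow_le_rpow_norm_sub_of_mem_frontier_inter_ball {E : Type*} [NormedAddCommGroup E]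
    {Ω : Set E} (hΩ : IsOpen Ω) {x p y : E} {d e : ℝ} (hx : x ∈ Ω) (hxp : dist x p = d)
    (hy : y ∈ frontier Ω ∩ ball p (d / 2)) (he : e ≤ 0) :
    (3/2 * d) ^ e ≤ ‖x - y‖ ^ e := by
  have hxy : 0 < ‖x - y‖ := norm_pos_iff.2 (sub_ne_zero.2 (ne_of_mem_of_mem_frontier hΩ hx hy.1))
  exact Real.rpow_le_rpow_of_nonpos hxy
    ((dist_eq_norm x y).symm ▸ dist_le_three_halves_mul_of_mem_ball hxp hy.2) he

lemma mul_measureReal_le_setIntegral_of_subset {X : Type*} [MeasurableSpace X] {ν : Measure X}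
    {f : X → ℝ} {s t : Set X} {a : ℝ} (hf : IntegrableOn f s ν) (hf0 : ∀ y ∈ s, 0 ≤ f y)
    (hs : MeasurableSet s) (ht : MeasurableSet t) (hts : t ⊆ s) (hνt : ν t ≠ ⊤)
    (ha : ∀ y ∈ t, a ≤ f y) :
    a * ν.real t ≤ ∫ y in s, f y ∂ν :=
  calc a * ν.real t ≤ ∫ y in t, f y ∂ν :=
        setIntegral_ge_of_const_le_real ht hνt ha (hf.mono_set hts)
    _ ≤ ∫ y in s, f y ∂ν :=
      setIntegral_mono_set hf ((ae_restrict_mem hs).mono hf0) (Filter.Eventually.of_forall hts)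

theorem stmt15_general {N : ℕ} (hN : 1 ≤ N) (Ω : Set (EuclideanSpace ℝ (Fin N)))
    (hΩ : IsOpen Ω)
    (δ : EuclideanSpace ℝ (Fin N) → ℝ)
    (μ βm βp : ℝ)
    (hβm : βm = 1/2 - Real.sqrt (1/4 - μ)) (hβp : βp = 1/2 + Real.sqrt (1/4 - μ))
    -- the surface measure on `∂Ω`
    (ν : Measure (EuclideanSpace ℝ (Fin N))) [IsFiniteMeasure ν]
    -- the Martin kernel and its two-sided estimate
    (K : EuclideanSpace ℝ (Fin N) → EuclideanSpace ℝ (Fin N) → ℝ) (c : ℝ) (hc : 1 < c)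
    (hK : ∀ x ∈ Ω, ∀ y ∈ frontier Ω,
      c⁻¹ * δ x ^ βp * ‖x - y‖ ^ (2*βm - N) ≤ K x y ∧
      K x y ≤ c * δ x ^ βp * ‖x - y‖ ^ (2*βm - N))
    (hKint : ∀ x ∈ Ω, IntegrableOn (K x) (frontier Ω) ν)
    (hKnn : ∀ x ∈ Ω, ∀ y ∈ frontier Ω, 0 ≤ K x y)
    -- the projection `x*` onto the boundary
    (xs : EuclideanSpace ℝ (Fin N) → EuclideanSpace ℝ (Fin N))
    (δ₀ : ℝ)
    (hxs : ∀ x ∈ {x ∈ Ω | δ x < δ₀}, xs x ∈ frontier Ω ∧ dist x (xs x) = δ x)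
    -- the boundary density property
    (ε₀ : ℝ) (hε₀ : 0 < ε₀)
    (hbdry : ∀ x ∈ {x ∈ Ω | δ x < δ₀},
      ε₀ * δ x ^ ((N:ℝ) - 1) ≤ (ν (frontier Ω ∩ Metric.ball (xs x) (δ x / 2))).toReal)
    (z : EuclideanSpace ℝ (Fin N) → ℝ)
    (hz : z = fun x => ∫ y in frontier Ω, K x y ∂ν) :
    ∃ c₀ > 0, ∀ x ∈ {x ∈ Ω | δ x < δ₀}, c₀ * δ x ^ βm ≤ z x := by
  have hc0 : 0 < c := one_pos.trans hc
  have hβ : βp + βm = 1 := by rw [hβm, hβp]; ring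
  have hexp : 2 * βm - N ≤ 0 := hβm ▸ two_mul_sub_sqrt_sub_natCast_nonpos hN _
  refine ⟨c⁻¹ * (3/2) ^ (2 * βm - N) * ε₀, by positivity, fun x hx => ?_⟩
  obtain ⟨hxs_mem, hxs_dist⟩ := hxs x hx
  have hd : 0 < δ x := hxs_dist ▸ dist_pos.2 (ne_of_mem_of_mem_frontier hΩ hx.1 hxs_mem)
  set S := frontier Ω ∩ ball (xs x) (δ x / 2)
  have hK_S : ∀ y ∈ S, c⁻¹ * δ x ^ βp * (3/2 * δ x) ^ (2 * βm - N) ≤ K x y := fun y hy =>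
    (mul_le_mul_of_nonneg_left
      (rpow_le_rpow_norm_sub_of_mem_frontier_inter_ball hΩ hx.1 hxs_dist hy hexp)
      (by positivity)).trans (hK x hx.1 y hy.1).1
  calc c⁻¹ * (3/2) ^ (2 * βm - N) * ε₀ * δ x ^ βm
      = c⁻¹ * δ x ^ βp * (3/2 * δ x) ^ (2 * βm - N) * (ε₀ * δ x ^ ((N : ℝ) - 1)) := by
        have := rpow_mul_mul_rpow_mul_rpow (n := N) hd (k := 3/2) (by norm_num) hβ
        linear_combination (-(c⁻¹ * ε₀)) * this
    _ ≤ c⁻¹ * δ x ^ βp * (3/2 * δ x) ^ (2 * βm - N) * ν.real S :=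
        mul_le_mul_of_nonneg_left (hbdry x hx) (by positivity)
    _ ≤ z x := hz ▸ mul_measureReal_le_setIntegral_of_subset (hKint x hx.1) (hKnn x hx.1)
        isClosed_frontier.measurableSet (isClosed_frontier.measurableSet.inter measurableSet_ball)
        Set.inter_subset_left (measure_ne_top ν S) hK_S

/-- If the Martin kernel satisfies the two-sided estimate
`c⁻¹δ(x)^{β₊}|x-y|^{2β₋-N} ≤ K(x,y) ≤ cδ(x)^{β₊}|x-y|^{2β₋-N}` and the boundary has the
density property `|∂Ω ∩ B_{δ(x)/2}(x*)| ≥ ε₀δ(x)^{N-1}`, then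
`z(x) = ∫_{∂Ω} K(x,y) dS(y)` satisfies `z(x) ≥ c₀δ(x)^{β₋}` in a boundary strip. -/
theorem stmt15 {N : ℕ} (hN : 1 ≤ N) (Ω : Set (EuclideanSpace ℝ (Fin N)))
    (hΩ : IsOpen Ω) (hΩb : Bornology.IsBounded Ω)
    (δ : EuclideanSpace ℝ (Fin N) → ℝ)
    (hδ : δ = fun x => Metric.infDist x (frontier Ω))
    (μ CH βm βp : ℝ) (hμ0 : 0 < μ) (hμCH : μ < CH) (hCH : CH ≤ 1/4)
    (hβm : βm = 1/2 - Real.sqrt (1/4 - μ)) (hβp : βp = 1/2 + Real.sqrt (1/4 - μ))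
    -- the surface measure on `∂Ω`
    (ν : Measure (EuclideanSpace ℝ (Fin N))) [IsFiniteMeasure ν]
    -- the Martin kernel and its two-sided estimate
    (K : EuclideanSpace ℝ (Fin N) → EuclideanSpace ℝ (Fin N) → ℝ) (c : ℝ) (hc : 1 < c)
    (hK : ∀ x ∈ Ω, ∀ y ∈ frontier Ω,
      c⁻¹ * δ x ^ βp * ‖x - y‖ ^ (2*βm - N) ≤ K x y ∧
      K x y ≤ c * δ x ^ βp * ‖x - y‖ ^ (2*βm - N))
    (hKint : ∀ x ∈ Ω, IntegrableOn (K x) (frontier Ω) ν)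
    (hKnn : ∀ x ∈ Ω, ∀ y ∈ frontier Ω, 0 ≤ K x y)
    -- the projection `x*` onto the boundary
    (xs : EuclideanSpace ℝ (Fin N) → EuclideanSpace ℝ (Fin N))
    (δ₀ : ℝ) (hδ₀ : 0 < δ₀)
    (hxs : ∀ x ∈ {x ∈ Ω | δ x < δ₀}, xs x ∈ frontier Ω ∧ dist x (xs x) = δ x)
    -- the boundary density property
    (ε₀ : ℝ) (hε₀ : 0 < ε₀)
    (hbdry : ∀ x ∈ {x ∈ Ω | δ x < δ₀},
      ε₀ * δ x ^ ((N:ℝ) - 1) ≤ (ν (frontier Ω ∩ Metric.ball (xs x) (δ x / 2))).toReal)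
    (z : EuclideanSpace ℝ (Fin N) → ℝ)
    (hz : z = fun x => ∫ y in frontier Ω, K x y ∂ν) :
    ∃ c₀ > 0, ∀ x ∈ {x ∈ Ω | δ x < δ₀}, c₀ * δ x ^ βm ≤ z x :=
  stmt15_general hN Ω hΩ δ μ βm βp hβm hβp ν K c hc hK hKint hKnn xs δ₀ hxs ε₀ hε₀ hbdry z hz
end
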